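/- arXiv:2209.07454 — 3 statements merged into one kernel-verified Lean document; each statement's English description precedes it below -/
import Mathlib

section
/- (Deterministic core of the guarantee without the Slater-type condition, ρ̃ = T^{−1/4}.) Let T, T₁ ∈ ℕ with 1 ≤ T₁ ≤ T, set ρ̃ := T^{−1/4}, let ρ ≥ 0, and let x_1,…,x_T ∈ X, λ_1,…,λ_{T₁} ∈ D_{ρ̃}, λ_{T₁+1},…,λ_T ∈ Δ_m, reward functions f_t : X → [0,1], constraint functions g_t : X → [−1,1]^m, measurable ḡ : X → [−1,1]^m, ξ*, ξ° ∈ Ξ with ḡ_i(ξ*) ≤ 0 and ḡ_i(ξ°) ≤ −ρ for all i, and constants M, R^P₁, R^D₁, R^P₂, R^D₂, E ≥ 0 satisfying hypotheses (i)–(vii) as follows: (i) Σ_{t=1}^{T₁}(f_t(x_t) − ⟨λ_t,g_t(x_t)⟩) ≥ Σ_{t=1}^{T₁}(f_t(ξ*) − ⟨λ_t,g_t(ξ*)⟩) − (1+2T^{1/4})R^P₁; (ii) for every λ ∈ D_{ρ̃}, Σ_{t=1}^{T₁}⟨λ_t,g_t(x_t)⟩ ≥ Σ_{t=1}^{T₁}⟨λ,g_t(x_t)⟩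 − T^{1/4}R^D₁; (iii) either T₁ = T or max_i Σ_{t=1}^{T₁} g_{t,i}(x_t) ≥ (T−T₁)T^{−1/4}; (iv) for every i, Σ_{t=1}^{T₁} g_{t,i}(x_t) ≤ (T−T₁)T^{−1/4} + M; (v) Σ_{t=1}^{T₁}⟨λ_t,g_t(ξ*)⟩ ≤ Σ_{t=1}^{T₁}⟨λ_t,ḡ(ξ*)⟩ + T^{1/4}E and Σ_{t=T₁+1}^{T}⟨λ_t,g_t(ξ°)⟩ ≤ Σ_{t=T₁+1}^{T}⟨λ_t,ḡ(ξ°)⟩ + E; (vi) Σ_{t=T₁+1}^{T}(−⟨λ_t,g_t(x_t)⟩) ≥ Σ_{t=T₁+1}^{T}(−⟨λ_t,g_t(ξ°)⟩) − 2R^P₂; (vii) for every λ ∈ Δ_m, Σ_{t=T₁+1}^{T}⟨λ_t,g_t(x_t)⟩ ≥ Σ_{t=T₁+1}^{T}⟨λ,g_t(x_t)⟩ − R^D₂. Then: Σ_{t=1}^{T} f_t(x_t) ≥ Σ_{t=1}^{T} f_t(ξ*) − T^{1/4}E − (1+2T^{1/4})R^P₁ − T^{1/4}R^D₁, and for every i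 ∈ [m], Σ_{t=1}^{T} g_{t,i}(x_t) ≤ T^{3/4} + M + 2R^P₂ + R^D₂ + E. -/
/-!
On the play phase, the primal regret bound (i) gives the reward of the iterates up to the
comparator's reward minus the Lagrangian terms. At `ξ*` these are at most `T^{1/4} E` by (v) and
feasibility; at the iterates, the dual regret (ii) against the vertex `T^{1/4} eᵢ` of `D_{ρ̃}`
picked out by the stopping rule (iii) makes them at least `T - T₁`, which pays for the rewards
(at most `1` each) of the remaining rounds. For the constraints, the play phase contributes at
most `(T - T₁) T^{-1/4} + M ≤ T^{3/4} + M` by (iv), and in the recovery phase the dual regret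
(vii) against `eᵢ`, the primal regret (vi) against `ξ°` and (v) bound the violation by that of
`ξ°`, which is nonpositive.
-/

open MeasureTheory Finset

theorem sum_Icc_one_add_sum_Icc_add_one {M : Type*} [AddCommMonoid M] (f : ℕ → M) {T₁ T : ℕ}
    (h : T₁ ≤ T) : ∑ t ∈ Icc 1 T₁, f t + ∑ t ∈ Icc (T₁ + 1) T, f t = ∑ t ∈ Icc 1 T, f t := by
  have := sum_Ioc_consecutive f (Nat.zero_le T₁) h
  rwa [← Icc_add_one_left_eq_Ioc, ← Icc_add_one_left_eq_Ioc, zero_add] at this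

theorem integral_le_one_of_mem_Icc {X : Type*} [MeasurableSpace X] {μ : Measure X}
    [IsProbabilityMeasure μ] {h : X → ℝ} (hh : ∀ y, h y ∈ Set.Icc (0 : ℝ) 1) :
    ∫ y, h y ∂μ ≤ 1 :=
  (integral_mono_of_nonneg (ae_of_all _ fun y ↦ (hh y).1) (integrable_const 1)
    (ae_of_all _ fun y ↦ (hh y).2)).trans_eq (by simp)

section
variable {ι : Type*} [Fintype ι] {s : Finset ℕ} {lam G : ℕ → ι → ℝ}

theorem sum_sum_mul_nonpos {v : ι → ℝ}
    (hlam : ∀ t ∈ s, ∀ i, 0 ≤ lam t i) (hv : ∀ i, v i ≤ 0) :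
    ∑ t ∈ s, ∑ i, lam t i * v i ≤ 0 :=
  sum_nonpos fun t ht ↦ sum_nonpos fun i _ ↦ mul_nonpos_of_nonneg_of_nonpos (hlam t ht i) (hv i)

variable [DecidableEq ι]

theorem sum_single_mul {R : Type*} [NonUnitalNonAssocSemiring R] (i : ι) (c : R) (v : ι → R) :
    ∑ j, (Pi.single i c : ι → R) j * v j = c * v i := by
  simp [Pi.single_apply]

theorem sub_le_sum_sum_mul_of_dual_regret {q R n : ℝ} (hq : 0 < q)
    (hreg : ∀ l : ι → ℝ, (∀ i, 0 ≤ l i) → ∑ i, l i ≤ q →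
      ∑ t ∈ s, ∑ i, lam t i * G t i ≥ ∑ t ∈ s, ∑ i, l i * G t i - q * R)
    (hstop : n = 0 ∨ ∃ i, n * q⁻¹ ≤ ∑ t ∈ s, G t i) :
    n - q * R ≤ ∑ t ∈ s, ∑ i, lam t i * G t i := by
  rcases hstop with rfl | ⟨i, hi⟩
  · simpa using hreg 0 (fun _ ↦ le_rfl) (by simpa using hq.le)
  · have hvertex := hreg (Pi.single i q)
      (Pi.single_nonneg.2 hq.le : (0 : ι → ℝ) ≤ Pi.single i q) (by simp)
    simp only [sum_single_mul, ← mul_sum] at hvertex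
    calc n - q * R = q * (n * q⁻¹) - q * R := by field_simp
      _ ≤ q * ∑ t ∈ s, G t i - q * R := by gcongr
      _ ≤ _ := hvertex

theorem sum_le_sum_sum_mul_add_of_dual_regret {R : ℝ}
    (hreg : ∀ l : ι → ℝ, (∀ i, 0 ≤ l i) → ∑ i, l i = 1 →
      ∑ t ∈ s, ∑ i, lam t i * G t i ≥ ∑ t ∈ s, ∑ i, l i * G t i - R) (i : ι) :
    ∑ t ∈ s, G t i ≤ ∑ t ∈ s, ∑ i, lam t i * G t i + R := by
  have hvertex := hreg (Pi.single i 1)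
    (Pi.single_nonneg.2 zero_le_one : (0 : ι → ℝ) ≤ Pi.single i 1) (by simp)
  simp only [sum_single_mul, one_mul] at hvertex
  linarith

end

theorem statement7_general {X : Type} [MeasurableSpace X] {m : ℕ}
    (T T₁ : ℕ) (hT₁ : 1 ≤ T₁) (hTT : T₁ ≤ T)
    (ρt ρ : ℝ) (hρt : ρt = (T : ℝ) ^ (-(1/4 : ℝ))) (hρ : 0 ≤ ρ)
    (x : ℕ → X) (lam : ℕ → Fin m → ℝ)
    -- play-phase duals lie in `D_{ρ̃}`, recovery-phase duals lie in `Δ_m`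
    (hlam1 : ∀ t ∈ Finset.Icc 1 T₁, (∀ i, 0 ≤ lam t i) ∧ ∑ i, lam t i ≤ 1 / ρt)
    (hlam2 : ∀ t ∈ Finset.Icc (T₁ + 1) T, (∀ i, 0 ≤ lam t i) ∧ ∑ i, lam t i = 1)
    (f : ℕ → X → ℝ) (g : ℕ → Fin m → X → ℝ)
    (hf01 : ∀ t y, f t y ∈ Set.Icc (0:ℝ) 1)
    (gbar : Fin m → X → ℝ)
    (ξs ξo : ProbabilityMeasure X)
    (hfeass : ∀ i, ∫ y, gbar i y ∂(ξs : Measure X) ≤ 0)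
    (hfeaso : ∀ i, ∫ y, gbar i y ∂(ξo : Measure X) ≤ -ρ)
    (M RP1 RD1 RP2 RD2 E : ℝ)
    -- (i) play-phase primal regret bound
    (h1 : ∑ t ∈ Finset.Icc 1 T₁, (f t (x t) - ∑ i, lam t i * g t i (x t)) ≥
          ∑ t ∈ Finset.Icc 1 T₁, ((∫ y, f t y ∂(ξs : Measure X)) -
            ∑ i, lam t i * ∫ y, g t i y ∂(ξs : Measure X))
          - (1 + 2 * (T : ℝ) ^ ((1/4 : ℝ))) * RP1)
    -- (ii) play-phase dual regret bound
    (h2 : ∀ l : Fin m → ℝ, (∀ i, 0 ≤ l i) → (∑ i, l i ≤ 1 / ρt) →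
          ∑ t ∈ Finset.Icc 1 T₁, ∑ i, lam t i * g t i (x t) ≥
          ∑ t ∈ Finset.Icc 1 T₁, ∑ i, l i * g t i (x t) - (T : ℝ) ^ ((1/4 : ℝ)) * RD1)
    -- (iii) stopping condition of the play phase
    (h3 : T₁ = T ∨ ∃ i, ((T : ℝ) - (T₁ : ℝ)) * (T : ℝ) ^ (-(1/4 : ℝ)) ≤
            ∑ t ∈ Finset.Icc 1 T₁, g t i (x t))
    -- (iv) play-phase violation threshold
    (h4 : ∀ i, ∑ t ∈ Finset.Icc 1 T₁, g t i (x t) ≤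
            ((T : ℝ) - (T₁ : ℝ)) * (T : ℝ) ^ (-(1/4 : ℝ)) + M)
    -- (v) concentration of the constraints at ξ* and ξ°
    (h5a : ∑ t ∈ Finset.Icc 1 T₁, ∑ i, lam t i * ∫ y, g t i y ∂(ξs : Measure X) ≤
           ∑ t ∈ Finset.Icc 1 T₁, ∑ i, lam t i * ∫ y, gbar i y ∂(ξs : Measure X)
             + (T : ℝ) ^ ((1/4 : ℝ)) * E)
    (h5b : ∑ t ∈ Finset.Icc (T₁ + 1) T, ∑ i, lam t i * ∫ y, g t i y ∂(ξo : Measure X) ≤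
           ∑ t ∈ Finset.Icc (T₁ + 1) T, ∑ i, lam t i * ∫ y, gbar i y ∂(ξo : Measure X) + E)
    -- (vi) recovery-phase primal regret bound
    (h6 : ∑ t ∈ Finset.Icc (T₁ + 1) T, (-(∑ i, lam t i * g t i (x t))) ≥
          ∑ t ∈ Finset.Icc (T₁ + 1) T,
            (-(∑ i, lam t i * ∫ y, g t i y ∂(ξo : Measure X))) - 2 * RP2)
    -- (vii) recovery-phase dual regret bound
    (h7 : ∀ l : Fin m → ℝ, (∀ i, 0 ≤ l i) → (∑ i, l i = 1) →
          ∑ t ∈ Finset.Icc (T₁ + 1) T, ∑ i, lam t i * g t i (x t) ≥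
          ∑ t ∈ Finset.Icc (T₁ + 1) T, ∑ i, l i * g t i (x t) - RD2) :
    (∑ t ∈ Finset.Icc 1 T, f t (x t) ≥
      ∑ t ∈ Finset.Icc 1 T, (∫ y, f t y ∂(ξs : Measure X))
        - (T : ℝ) ^ ((1/4 : ℝ)) * E - (1 + 2 * (T : ℝ) ^ ((1/4 : ℝ))) * RP1
        - (T : ℝ) ^ ((1/4 : ℝ)) * RD1) ∧
    (∀ i, ∑ t ∈ Finset.Icc 1 T, g t i (x t) ≤
      (T : ℝ) ^ ((3/4 : ℝ)) + M + 2 * RP2 + RD2 + E) := by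
  have hT : (0 : ℝ) < T := by exact_mod_cast hT₁.trans hTT
  set q : ℝ := (T : ℝ) ^ (1/4 : ℝ)
  have hq : 0 < q := by positivity
  have hneg : (T : ℝ) ^ (-(1/4 : ℝ)) = q⁻¹ := Real.rpow_neg hT.le _
  have h34 : (T : ℝ) ^ (3/4 : ℝ) = T * q⁻¹ := by
    rw [show (3/4 : ℝ) = 1 + -(1/4) by norm_num, Real.rpow_add hT, Real.rpow_one, hneg]
  rw [hneg] at h3 h4
  rw [hρt, hneg, one_div, inv_inv] at h2
  have hplay := sub_le_sum_sum_mul_of_dual_regret hq h2 (h3.imp (fun h ↦ by rw [h, sub_self]) id)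
  simp only [← sum_Icc_one_add_sum_Icc_add_one _ hTT]
  constructor
  · have hξs := sum_sum_mul_nonpos (fun t ht ↦ (hlam1 t ht).1) hfeass
    have hrest : ∑ t ∈ Icc (T₁ + 1) T, ∫ y, f t y ∂(ξs : Measure X) ≤ T - T₁ := by
      refine (sum_le_card_nsmul _ _ 1 fun t _ ↦ integral_le_one_of_mem_Icc (hf01 t)).trans_eq ?_
      rw [nsmul_one, Nat.card_Icc, Nat.add_sub_add_right, Nat.cast_sub hTT]
    have hx := sum_nonneg fun t (_ : t ∈ Icc (T₁ + 1) T) ↦ (hf01 t (x t)).1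
    rw [sum_sub_distrib, sum_sub_distrib] at h1
    linarith
  · intro i
    have hrec := sum_le_sum_sum_mul_add_of_dual_regret h7 i
    have hξo := sum_sum_mul_nonpos (fun t ht ↦ (hlam2 t ht).1) fun j ↦
      (hfeaso j).trans (neg_nonpos.2 hρ)
    have hT₁q : (T - T₁ : ℝ) * q⁻¹ ≤ T * q⁻¹ := by gcongr; simp
    rw [sum_neg_distrib, sum_neg_distrib] at h6
    linarith [h4 i]

/-- Deterministic core of the guarantee without the Slater-type condition, with
`ρ̃ = T^{-1/4}` (real powers of the natural number `T`). -/
theorem statement7 {X : Type} [MeasurableSpace X] {m : ℕ} (hm : 0 < m)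
    (T T₁ : ℕ) (hT₁ : 1 ≤ T₁) (hTT : T₁ ≤ T)
    (ρt ρ : ℝ) (hρt : ρt = (T : ℝ) ^ (-(1/4 : ℝ))) (hρ : 0 ≤ ρ)
    (x : ℕ → X) (lam : ℕ → Fin m → ℝ)
    -- play-phase duals lie in `D_{ρ̃}`, recovery-phase duals lie in `Δ_m`
    (hlam1 : ∀ t ∈ Finset.Icc 1 T₁, (∀ i, 0 ≤ lam t i) ∧ ∑ i, lam t i ≤ 1 / ρt)
    (hlam2 : ∀ t ∈ Finset.Icc (T₁ + 1) T, (∀ i, 0 ≤ lam t i) ∧ ∑ i, lam t i = 1)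
    (f : ℕ → X → ℝ) (g : ℕ → Fin m → X → ℝ)
    (hfm : ∀ t, Measurable (f t)) (hf01 : ∀ t y, f t y ∈ Set.Icc (0:ℝ) 1)
    (hgm : ∀ t i, Measurable (g t i)) (hg1 : ∀ t i y, g t i y ∈ Set.Icc (-1:ℝ) 1)
    (gbar : Fin m → X → ℝ) (hgbm : ∀ i, Measurable (gbar i))
    (hgb1 : ∀ i y, gbar i y ∈ Set.Icc (-1:ℝ) 1)
    (ξs ξo : ProbabilityMeasure X)
    (hfeass : ∀ i, ∫ y, gbar i y ∂(ξs : Measure X) ≤ 0)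
    (hfeaso : ∀ i, ∫ y, gbar i y ∂(ξo : Measure X) ≤ -ρ)
    (M RP1 RD1 RP2 RD2 E : ℝ)
    (hM : 0 ≤ M) (hRP1 : 0 ≤ RP1) (hRD1 : 0 ≤ RD1) (hRP2 : 0 ≤ RP2) (hRD2 : 0 ≤ RD2)
    (hE : 0 ≤ E)
    -- (i) play-phase primal regret bound
    (h1 : ∑ t ∈ Finset.Icc 1 T₁, (f t (x t) - ∑ i, lam t i * g t i (x t)) ≥
          ∑ t ∈ Finset.Icc 1 T₁, ((∫ y, f t y ∂(ξs : Measure X)) -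
            ∑ i, lam t i * ∫ y, g t i y ∂(ξs : Measure X))
          - (1 + 2 * (T : ℝ) ^ ((1/4 : ℝ))) * RP1)
    -- (ii) play-phase dual regret bound
    (h2 : ∀ l : Fin m → ℝ, (∀ i, 0 ≤ l i) → (∑ i, l i ≤ 1 / ρt) →
          ∑ t ∈ Finset.Icc 1 T₁, ∑ i, lam t i * g t i (x t) ≥
          ∑ t ∈ Finset.Icc 1 T₁, ∑ i, l i * g t i (x t) - (T : ℝ) ^ ((1/4 : ℝ)) * RD1)
    -- (iii) stopping condition of the play phase
    (h3 : T₁ = T ∨ ∃ i, ((T : ℝ) - (T₁ : ℝ)) * (T : ℝ) ^ (-(1/4 : ℝ)) ≤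
            ∑ t ∈ Finset.Icc 1 T₁, g t i (x t))
    -- (iv) play-phase violation threshold
    (h4 : ∀ i, ∑ t ∈ Finset.Icc 1 T₁, g t i (x t) ≤
            ((T : ℝ) - (T₁ : ℝ)) * (T : ℝ) ^ (-(1/4 : ℝ)) + M)
    -- (v) concentration of the constraints at ξ* and ξ°
    (h5a : ∑ t ∈ Finset.Icc 1 T₁, ∑ i, lam t i * ∫ y, g t i y ∂(ξs : Measure X) ≤
           ∑ t ∈ Finset.Icc 1 T₁, ∑ i, lam t i * ∫ y, gbar i y ∂(ξs : Measure X)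
             + (T : ℝ) ^ ((1/4 : ℝ)) * E)
    (h5b : ∑ t ∈ Finset.Icc (T₁ + 1) T, ∑ i, lam t i * ∫ y, g t i y ∂(ξo : Measure X) ≤
           ∑ t ∈ Finset.Icc (T₁ + 1) T, ∑ i, lam t i * ∫ y, gbar i y ∂(ξo : Measure X) + E)
    -- (vi) recovery-phase primal regret bound
    (h6 : ∑ t ∈ Finset.Icc (T₁ + 1) T, (-(∑ i, lam t i * g t i (x t))) ≥
          ∑ t ∈ Finset.Icc (T₁ + 1) T,
            (-(∑ i, lam t i * ∫ y, g t i y ∂(ξo : Measure X))) - 2 * RP2)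
    -- (vii) recovery-phase dual regret bound
    (h7 : ∀ l : Fin m → ℝ, (∀ i, 0 ≤ l i) → (∑ i, l i = 1) →
          ∑ t ∈ Finset.Icc (T₁ + 1) T, ∑ i, lam t i * g t i (x t) ≥
          ∑ t ∈ Finset.Icc (T₁ + 1) T, ∑ i, l i * g t i (x t) - RD2) :
    (∑ t ∈ Finset.Icc 1 T, f t (x t) ≥
      ∑ t ∈ Finset.Icc 1 T, (∫ y, f t y ∂(ξs : Measure X))
        - (T : ℝ) ^ ((1/4 : ℝ)) * E - (1 + 2 * (T : ℝ) ^ ((1/4 : ℝ))) * RP1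
        - (T : ℝ) ^ ((1/4 : ℝ)) * RD1) ∧
    (∀ i, ∑ t ∈ Finset.Icc 1 T, g t i (x t) ≤
      (T : ℝ) ^ ((3/4 : ℝ)) + M + 2 * RP2 + RD2 + E) :=
  statement7_general T T₁ hT₁ hTT ρt ρ hρt hρ x lam hlam1 hlam2 f g hf01 gbar ξs ξo hfeass hfeaso M
    RP1 RD1 RP2 RD2 E h1 h2 h3 h4 h5a h5b h6 h7
end

section
/- (Upper bound on the cumulative Lagrangian value via the dual player, fully stochastic setting.) Let τ ∈ ℕ with τ ≥ 1, let ρ > 0 satisfy ρ = sup_{ξ∈Ξ} min_{i∈[m]}(−ḡ_i(ξ)), let 0 < ρ̃ ≤ ρ/2, and let x_1,…,x_τ ∈ X, λ_1,…,λ_τ ∈ D_{ρ̃}, reward functions f_t : X → [0,1], constraint functions g_t : X → [−1,1]^m, measurable f̄ : X → [0,1] and ḡ : X → [−1,1]^m, and constants R^D, E ≥ 0. Assume: (i) for every λ ∈ D_{ρ̃}, Σ_{t=1}^{τ}⟨λ_t, g_t(x_t)⟩ ≥ Σ_{t=1}^{τ}⟨λ, g_t(x_t)⟩ − R^D/ρ̃;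 (ii) |Σ_{t=1}^{τ} f_t(x_t) − Σ_{t=1}^{τ} f̄(x_t)| ≤ E; (iii) for every i ∈ [m], |Σ_{t=1}^{τ} g_{t,i}(x_t) − Σ_{t=1}^{τ} ḡ_i(x_t)| ≤ E. Then for every i ∈ [m]: Σ_{t=1}^{τ}(f_t(x_t) − ⟨λ_t,g_t(x_t)⟩) ≤ τ·OPT_{f̄,ḡ} + R^D/ρ̃ + (1+2/ρ̃)E − Σ_{t=1}^{τ} g_{t,i}(x_t). -/
/-!
Let `V⁺` be the largest positive part of the constraint sums `Σ_t ḡ_j(x_t)`. Comparing the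
empirical distribution of the trajectory with its mixture with a strictly feasible distribution
(Slater slack close to `ρ`) gives `Σ_t f̄(x_t) ≤ τ·OPT + V⁺/ρ`. Testing the dual regret bound
against `λ = e_j/ρ̃` for the maximizing `j` shows that the dual player pays at least
`(V⁺ - E)/ρ̃`, and since `2ρ̃ ≤ ρ ≤ 1` this absorbs both `V⁺/ρ` and the `Σ_t g_{t,i}(x_t)` term.
-/

open MeasureTheory Finset

/-- `OPT_{f̄,ḡ} = sup { f̄(ξ) : ξ ∈ Ξ, ḡ_i(ξ) ≤ 0 ∀ i }`. -/
noncomputable def OPTval {X : Type} [MeasurableSpace X] {m : ℕ}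
    (f : X → ℝ) (g : Fin m → X → ℝ) : ℝ :=
  sSup {r : ℝ | ∃ ξ : ProbabilityMeasure X,
    (∀ i, ∫ y, g i y ∂(ξ : Measure X) ≤ 0) ∧ r = ∫ y, f y ∂(ξ : Measure X)}

/-- `d_ḡ = sup_{ξ∈Ξ} min_{i∈[m]} (−ḡ_i(ξ))`. -/
noncomputable def dgval {X : Type} [MeasurableSpace X] {m : ℕ}
    (g : Fin m → X → ℝ) : ℝ :=
  sSup {r : ℝ | ∃ ξ : ProbabilityMeasure X, r = ⨅ i, -(∫ y, g i y ∂(ξ : Measure X))}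

open Filter Topology
open scoped ENNReal

section ProbabilityMeasures

variable {X : Type} [MeasurableSpace X]

theorem integrable_of_forall_mem_Icc (μ : Measure X) [IsFiniteMeasure μ] {h : X → ℝ}
    (hh : Measurable h) {a b : ℝ} (hab : ∀ y, h y ∈ Set.Icc a b) : Integrable h μ :=
  Integrable.of_mem_Icc a b hh.aemeasurable (ae_of_all _ hab)

theorem integral_mem_Icc_of_forall_mem_Icc (μ : Measure X) [IsProbabilityMeasure μ]
    {h : X → ℝ} (hh : Measurable h) {a b : ℝ} (hab : ∀ y, h y ∈ Set.Icc a b) :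
    ∫ y, h y ∂μ ∈ Set.Icc a b :=
  (convex_Icc a b).integral_mem isClosed_Icc (ae_of_all _ hab)
    (integrable_of_forall_mem_Icc μ hh hab)

noncomputable def empiricalMeasure {ι : Type*} (x : ι → X) (s : Finset ι) : Measure X :=
  ((#s : ℝ≥0∞)⁻¹) • ∑ t ∈ s, Measure.dirac (x t)

theorem isProbabilityMeasure_empiricalMeasure {ι : Type*} (x : ι → X) {s : Finset ι}
    (hs : s.Nonempty) : IsProbabilityMeasure (empiricalMeasure x s) := by
  constructor
  simp only [empiricalMeasure, Measure.smul_apply, Measure.finsetSum_apply, measure_univ,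
    sum_const, nsmul_eq_mul, mul_one, smul_eq_mul]
  exact ENNReal.inv_mul_cancel (by simpa using hs.ne_empty) (ENNReal.natCast_ne_top _)

theorem integral_empiricalMeasure {ι : Type*} (x : ι → X) (s : Finset ι) {h : X → ℝ}
    (hh : Measurable h) :
    ∫ y, h y ∂(empiricalMeasure x s) = (#s : ℝ)⁻¹ * ∑ t ∈ s, h (x t) := by
  rw [empiricalMeasure, integral_smul_measure, integral_finsetSum_measure
    fun t _ => integrable_dirac' hh.stronglyMeasurable (by simp)]
  simp [integral_dirac' _ _ hh.stronglyMeasurable]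

theorem exists_integral_eq_convex_combination (ξ₁ ξ₂ : ProbabilityMeasure X) {θ : ℝ}
    (hθ0 : 0 ≤ θ) (hθ1 : θ ≤ 1) :
    ∃ ξ : ProbabilityMeasure X, ∀ h : X → ℝ, Integrable h ξ₁ → Integrable h ξ₂ →
      ∫ y, h y ∂(ξ : Measure X) =
        (1 - θ) * ∫ y, h y ∂(ξ₁ : Measure X) + θ * ∫ y, h y ∂(ξ₂ : Measure X) := by
  let μ : Measure X := ENNReal.ofReal (1 - θ) • (ξ₁ : Measure X) + ENNReal.ofReal θ • ξ₂
  have : IsProbabilityMeasure μ := by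
    constructor
    simp only [μ, Measure.add_apply, Measure.smul_apply, measure_univ, smul_eq_mul, mul_one]
    rw [← ENNReal.ofReal_add (by linarith) hθ0]
    simp
  refine ⟨⟨μ, this⟩, fun h h₁ h₂ => ?_⟩
  change ∫ y, h y ∂μ = _
  rw [integral_add_measure (h₁.smul_measure ENNReal.ofReal_ne_top)
    (h₂.smul_measure ENNReal.ofReal_ne_top), integral_smul_measure, integral_smul_measure,
    ENNReal.toReal_ofReal (by linarith), ENNReal.toReal_ofReal hθ0]
  simp

end ProbabilityMeasures

section Slater

variable {X : Type} [MeasurableSpace X] {m : ℕ}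

theorem integral_le_OPTval {f : X → ℝ} (hf : Measurable f) (hf01 : ∀ y, f y ∈ Set.Icc (0:ℝ) 1)
    (g : Fin m → X → ℝ) {ξ : ProbabilityMeasure X} (hξ : ∀ i, ∫ y, g i y ∂(ξ : Measure X) ≤ 0) :
    ∫ y, f y ∂(ξ : Measure X) ≤ OPTval f g := by
  refine le_csSup ⟨1, ?_⟩ ⟨ξ, hξ, rfl⟩
  rintro r ⟨ξ', -, rfl⟩
  exact (integral_mem_Icc_of_forall_mem_Icc _ hf hf01).2

theorem dgval_le_one [Nonempty (Fin m)] {g : Fin m → X → ℝ} (hg : ∀ i, Measurable (g i))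
    (hg1 : ∀ i y, g i y ∈ Set.Icc (-1:ℝ) 1) : dgval g ≤ 1 := by
  refine Real.sSup_le ?_ zero_le_one
  rintro r ⟨ξ, rfl⟩
  let i : Fin m := Classical.arbitrary (Fin m)
  have := (integral_mem_Icc_of_forall_mem_Icc (ξ : Measure X) (hg i) (hg1 i)).1
  exact (ciInf_le (Set.finite_range _).bddBelow i).trans (by linarith)

theorem exists_forall_integral_le_neg_of_lt_dgval {g : Fin m → X → ℝ} {r : ℝ} (hr0 : 0 ≤ r)
    (hr : r < dgval g) : ∃ ξ : ProbabilityMeasure X, ∀ i, ∫ y, g i y ∂(ξ : Measure X) ≤ -r := by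
  obtain hempty | hne := Set.eq_empty_or_nonempty
    {r : ℝ | ∃ ξ : ProbabilityMeasure X, r = ⨅ i, -(∫ y, g i y ∂(ξ : Measure X))}
  · rw [dgval, hempty, Real.sSup_empty] at hr
    exact absurd hr hr0.not_gt
  obtain ⟨_, ⟨ξ, rfl⟩, hξ⟩ := exists_lt_of_lt_csSup hne hr
  have hbdd := (Set.finite_range fun j => -(∫ y, g j y ∂(ξ : Measure X))).bddBelow
  exact ⟨ξ, fun i => by linarith [ciInf_le hbdd i]⟩

/-- Mixing `ξ` with `ξ₀` in the ratio `r : c` gives a feasible measure whose reward differs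
from that of `ξ` by at most `c / (c + r)`. -/
theorem integral_le_OPTval_add_div_of_slack {f : X → ℝ} (hf : Measurable f)
    (hf01 : ∀ y, f y ∈ Set.Icc (0:ℝ) 1) {g : Fin m → X → ℝ} (hg : ∀ i, Measurable (g i))
    (hg1 : ∀ i y, g i y ∈ Set.Icc (-1:ℝ) 1) {ξ ξ₀ : ProbabilityMeasure X} {c r : ℝ}
    (hc : 0 ≤ c) (hr : 0 < r) (hξ : ∀ i, ∫ y, g i y ∂(ξ : Measure X) ≤ c)
    (hξ₀ : ∀ i, ∫ y, g i y ∂(ξ₀ : Measure X) ≤ -r) :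
    ∫ y, f y ∂(ξ : Measure X) ≤ OPTval f g + c / r := by
  set θ := c / (c + r)
  have hθ0 : 0 ≤ θ := by positivity
  have hθ1 : θ ≤ 1 := div_le_one_of_le₀ (by linarith) (by positivity)
  have hθc : (1 - θ) * c = θ * r := by
    have : c + r ≠ 0 := by positivity
    simp only [θ]; field_simp; ring
  have hθr : θ ≤ c / r := div_le_div_of_nonneg_left hc hr (by linarith)
  obtain ⟨ξθ, hξθ⟩ := exists_integral_eq_convex_combination ξ ξ₀ hθ0 hθ1
  have integral_ξθ {h : X → ℝ} {a b : ℝ} (hh : Measurable h) (hab : ∀ y, h y ∈ Set.Icc a b) :=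
    hξθ h (integrable_of_forall_mem_Icc _ hh hab) (integrable_of_forall_mem_Icc _ hh hab)
  have feasible : ∀ i, ∫ y, g i y ∂(ξθ : Measure X) ≤ 0 := fun i => by
    rw [integral_ξθ (hg i) (hg1 i)]
    nlinarith [hξ i, hξ₀ i]
  have hopt := integral_le_OPTval hf hf01 g feasible
  rw [integral_ξθ hf hf01] at hopt
  nlinarith [(integral_mem_Icc_of_forall_mem_Icc (ξ : Measure X) hf hf01).2,
    (integral_mem_Icc_of_forall_mem_Icc (ξ₀ : Measure X) hf hf01).1]

theorem integral_le_OPTval_add_div_dgval {f : X → ℝ} (hf : Measurable f)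
    (hf01 : ∀ y, f y ∈ Set.Icc (0:ℝ) 1) {g : Fin m → X → ℝ} (hg : ∀ i, Measurable (g i))
    (hg1 : ∀ i y, g i y ∈ Set.Icc (-1:ℝ) 1) (hρ : 0 < dgval g) (ξ : ProbabilityMeasure X)
    {c : ℝ} (hc : 0 ≤ c) (hξ : ∀ i, ∫ y, g i y ∂(ξ : Measure X) ≤ c) :
    ∫ y, f y ∂(ξ : Measure X) ≤ OPTval f g + c / dgval g := by
  have hslack : ∀ r ∈ Set.Ioo 0 (dgval g), ∫ y, f y ∂(ξ : Measure X) ≤ OPTval f g + c / r := by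
    rintro r ⟨hr0, hr⟩
    obtain ⟨ξ₀, hξ₀⟩ := exists_forall_integral_le_neg_of_lt_dgval hr0.le hr
    exact integral_le_OPTval_add_div_of_slack hf hf01 hg hg1 hc hr0 hξ hξ₀
  have hlim : Tendsto (fun r => OPTval f g + c / r) (𝓝[<] dgval g)
      (𝓝 (OPTval f g + c / dgval g)) :=
    ((continuousAt_const.add (continuousAt_const.div continuousAt_id hρ.ne')).tendsto).mono_left
      nhdsWithin_le_nhds
  exact ge_of_tendsto hlim (mem_of_superset (Ioo_mem_nhdsLT hρ) hslack)

end Slater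

theorem sum_le_card_mul_OPTval_add_div_dgval {X : Type} {ι : Type*} [MeasurableSpace X] {m : ℕ}
    {f : X → ℝ} (hf : Measurable f) (hf01 : ∀ y, f y ∈ Set.Icc (0:ℝ) 1)
    {g : Fin m → X → ℝ} (hg : ∀ i, Measurable (g i)) (hg1 : ∀ i y, g i y ∈ Set.Icc (-1:ℝ) 1)
    (hρ : 0 < dgval g) (x : ι → X) {s : Finset ι} (hs : s.Nonempty) {c : ℝ} (hc : 0 ≤ c)
    (hsc : ∀ i, ∑ t ∈ s, g i (x t) ≤ c) :
    ∑ t ∈ s, f (x t) ≤ #s * OPTval f g + c / dgval g := by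
  have hcard : (0 : ℝ) < #s := by exact_mod_cast hs.card_pos
  let ξ : ProbabilityMeasure X := ⟨empiricalMeasure x s, isProbabilityMeasure_empiricalMeasure x hs⟩
  have hξ : ∀ i, ∫ y, g i y ∂(ξ : Measure X) ≤ c / #s := fun i => by
    change ∫ y, g i y ∂(empiricalMeasure x s) ≤ _
    rw [integral_empiricalMeasure x s (hg i), inv_mul_eq_div]
    exact div_le_div_of_nonneg_right (hsc i) hcard.le
  have := integral_le_OPTval_add_div_dgval hf hf01 hg hg1 hρ ξ (by positivity) hξ
  change ∫ y, f y ∂(empiricalMeasure x s) ≤ _ at this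
  rw [integral_empiricalMeasure x s hf, inv_mul_le_iff₀ hcard] at this
  calc ∑ t ∈ s, f (x t) ≤ #s * (OPTval f g + c / #s / dgval g) := this
    _ = #s * OPTval f g + c / dgval g := by field_simp

theorem max_div_le_of_forall_sum_mul_le {m : ℕ} {q L : ℝ} (hq : 0 < q) {G : Fin m → ℝ}
    (h : ∀ l : Fin m → ℝ, (∀ i, 0 ≤ l i) → ∑ i, l i ≤ 1 / q → ∑ i, l i * G i ≤ L)
    (j : Fin m) : max (G j) 0 / q ≤ L := by
  rcases le_total (G j) 0 with hGj | hGj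
  · simpa [max_eq_right hGj] using h 0 (fun _ => le_rfl) (by simp [hq.le])
  · have := h (fun k => if k = j then 1 / q else 0) (fun k => by split_ifs <;> positivity)
      (by simp)
    simpa [max_eq_left hGj, div_eq_inv_mul] using this

theorem div_add_self_le_div {V ρ ρt : ℝ} (hV : 0 ≤ V) (hρt : 0 < ρt) (hρt2 : ρt ≤ ρ / 2)
    (hρ1 : ρ ≤ 1) : V / ρ + V ≤ V / ρt := by
  have hinv : 1 / ρ + 1 ≤ 1 / ρt := by
    have hhalf : 1 / (2 * ρt) + 1 / (2 * ρt) = 1 / ρt := by field_simp; ring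
    have hρ : 1 / ρ ≤ 1 / (2 * ρt) := one_div_le_one_div_of_le (by positivity) (by linarith)
    have hone : 1 ≤ 1 / (2 * ρt) := by rw [le_div_iff₀ (by positivity)]; linarith
    linarith
  simpa [mul_add, div_eq_mul_one_div V] using mul_le_mul_of_nonneg_left hinv hV

theorem statement9_general {X : Type} [MeasurableSpace X] {m : ℕ}
    (τ : ℕ) (hτ : 1 ≤ τ)
    (ρ ρt : ℝ)
    (gbar : Fin m → X → ℝ) (hgbm : ∀ i, Measurable (gbar i))
    (hgb1 : ∀ i y, gbar i y ∈ Set.Icc (-1:ℝ) 1)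
    (hρ : ρ = dgval gbar)
    (hρt : 0 < ρt) (hρt2 : ρt ≤ ρ / 2)
    (x : ℕ → X) (lam : ℕ → Fin m → ℝ)
    (f : ℕ → X → ℝ) (g : ℕ → Fin m → X → ℝ)
    (fbar : X → ℝ) (hfbm : Measurable fbar) (hfb01 : ∀ y, fbar y ∈ Set.Icc (0:ℝ) 1)
    (RD E : ℝ) (hE : 0 ≤ E)
    -- (i) dual regret bound
    (h1 : ∀ l : Fin m → ℝ, (∀ i, 0 ≤ l i) → (∑ i, l i ≤ 1 / ρt) →
          ∑ t ∈ Finset.Icc 1 τ, ∑ i, lam t i * g t i (x t) ≥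
          ∑ t ∈ Finset.Icc 1 τ, ∑ i, l i * g t i (x t) - RD / ρt)
    -- (ii) concentration of rewards along the trajectory
    (h2 : |∑ t ∈ Finset.Icc 1 τ, f t (x t) - ∑ t ∈ Finset.Icc 1 τ, fbar (x t)| ≤ E)
    -- (iii) concentration of constraints along the trajectory
    (h3 : ∀ i, |∑ t ∈ Finset.Icc 1 τ, g t i (x t) -
            ∑ t ∈ Finset.Icc 1 τ, gbar i (x t)| ≤ E) :
    ∀ i, ∑ t ∈ Finset.Icc 1 τ, (f t (x t) - ∑ j, lam t j * g t j (x t)) ≤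
      (τ : ℝ) * OPTval fbar gbar + RD / ρt + (1 + 2 / ρt) * E
        - ∑ t ∈ Finset.Icc 1 τ, g t i (x t) := by
  intro i
  have : Nonempty (Fin m) := ⟨i⟩
  have hρpos : 0 < ρ := by linarith
  have hρ1 : ρ ≤ 1 := hρ ▸ dgval_le_one hgbm hgb1
  obtain ⟨j, hj⟩ := Finite.exists_max fun k => ∑ t ∈ Icc 1 τ, gbar k (x t)
  set V := max (∑ t ∈ Icc 1 τ, gbar j (x t)) 0
  have hV0 : 0 ≤ V := le_max_right _ _
  have hprimal : ∑ t ∈ Icc 1 τ, fbar (x t) ≤ τ * OPTval fbar gbar + V / ρ := by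
    simpa [← hρ] using sum_le_card_mul_OPTval_add_div_dgval hfbm hfb01 hgbm hgb1
      (hρ ▸ hρpos) x (nonempty_Icc.2 hτ) hV0 fun k => (hj k).trans (le_max_left _ _)
  have hdual := max_div_le_of_forall_sum_mul_le hρt (j := j)
    (G := fun k => ∑ t ∈ Icc 1 τ, g t k (x t))
    (L := ∑ t ∈ Icc 1 τ, ∑ k, lam t k * g t k (x t) + RD / ρt) fun l hl0 hl1 => by
      simp only [mul_sum]
      rw [sum_comm]
      linarith [h1 l hl0 hl1]
  have hviolation : V / ρt - E / ρt ≤ max (∑ t ∈ Icc 1 τ, g t j (x t)) 0 / ρt := by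
    rw [← sub_div, ← max_sub_sub_right]
    exact div_le_div_of_nonneg_right
      (max_le_max (by linarith [(abs_le.1 (h3 j)).1]) (by linarith)) hρt.le
  have hVcoef := div_add_self_le_div hV0 hρt hρt2 hρ1
  have hEcoef : E ≤ E / ρt := le_div_self hE hρt (by linarith)
  rw [sum_sub_distrib]
  linarith [(abs_le.1 h2).2, (abs_le.1 (h3 i)).2, (hj i).trans (le_max_left _ 0),
    show (1 + 2 / ρt) * E = E + 2 * (E / ρt) by ring]

/-- Upper bound on the cumulative Lagrangian value via the dual player in the fully
stochastic setting. -/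
theorem statement9 {X : Type} [MeasurableSpace X] {m : ℕ} (hm : 0 < m)
    (τ : ℕ) (hτ : 1 ≤ τ)
    (ρ ρt : ℝ) (hρpos : 0 < ρ)
    (gbar : Fin m → X → ℝ) (hgbm : ∀ i, Measurable (gbar i))
    (hgb1 : ∀ i y, gbar i y ∈ Set.Icc (-1:ℝ) 1)
    (hρ : ρ = dgval gbar)
    (hρt : 0 < ρt) (hρt2 : ρt ≤ ρ / 2)
    (x : ℕ → X) (lam : ℕ → Fin m → ℝ)
    -- the dual iterates lie in `D_{ρ̃}`
    (hlam : ∀ t ∈ Finset.Icc 1 τ, (∀ i, 0 ≤ lam t i) ∧ ∑ i, lam t i ≤ 1 / ρt)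
    (f : ℕ → X → ℝ) (g : ℕ → Fin m → X → ℝ)
    (hfm : ∀ t, Measurable (f t)) (hf01 : ∀ t y, f t y ∈ Set.Icc (0:ℝ) 1)
    (hgm : ∀ t i, Measurable (g t i)) (hg1 : ∀ t i y, g t i y ∈ Set.Icc (-1:ℝ) 1)
    (fbar : X → ℝ) (hfbm : Measurable fbar) (hfb01 : ∀ y, fbar y ∈ Set.Icc (0:ℝ) 1)
    (RD E : ℝ) (hRD : 0 ≤ RD) (hE : 0 ≤ E)
    -- (i) dual regret bound
    (h1 : ∀ l : Fin m → ℝ, (∀ i, 0 ≤ l i) → (∑ i, l i ≤ 1 / ρt) →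
          ∑ t ∈ Finset.Icc 1 τ, ∑ i, lam t i * g t i (x t) ≥
          ∑ t ∈ Finset.Icc 1 τ, ∑ i, l i * g t i (x t) - RD / ρt)
    -- (ii) concentration of rewards along the trajectory
    (h2 : |∑ t ∈ Finset.Icc 1 τ, f t (x t) - ∑ t ∈ Finset.Icc 1 τ, fbar (x t)| ≤ E)
    -- (iii) concentration of constraints along the trajectory
    (h3 : ∀ i, |∑ t ∈ Finset.Icc 1 τ, g t i (x t) -
            ∑ t ∈ Finset.Icc 1 τ, gbar i (x t)| ≤ E) :
    ∀ i, ∑ t ∈ Finset.Icc 1 τ, (f t (x t) - ∑ j, lam t j * g t j (x t)) ≤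
      (τ : ℝ) * OPTval fbar gbar + RD / ρt + (1 + 2 / ρt) * E
        - ∑ t ∈ Finset.Icc 1 τ, g t i (x t) :=
  statement9_general τ hτ ρ ρt gbar hgbm hgb1 hρ hρt hρt2 x lam f g fbar hfbm hfb01 RD E hE h1 h2 h3
end

section
/- (Deterministic core of the guarantee with adversarial rewards and adversarial constraints.) Let T, T₁ ∈ ℕ with 1 ≤ T₁ ≤ T, let ρ ≥ 0 and 0 < ρ̃ ≤ ρ, and let x_1,…,x_T ∈ X, λ_1,…,λ_{T₁} ∈ D_{ρ̃}, λ_{T₁+1},…,λ_T ∈ Δ_m, reward functions f_t : X → [0,1], constraint functions g_t : X → [−1,1]^m, ξ*, ξ° ∈ Ξ with g_{t,i}(ξ°) ≤ −ρ for all t ∈ [T] and i ∈ [m], and constants M, R^P₁, R^D₁, R^P₂, R^D₂ ≥ 0. Assume: (i) for every ξ ∈ Ξ, Σ_{t=1}^{T₁}(f_t(x_t) − ⟨λ_t,g_t(x_t)⟩) ≥ Σ_{t=1}^{T₁}(f_t(ξ) − ⟨λ_t,g_t(ξ)⟩) − (1+2/ρ̃)R^P₁; (ii) for every λ ∈ D_{ρ̃},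 Σ_{t=1}^{T₁}⟨λ_t,g_t(x_t)⟩ ≥ Σ_{t=1}^{T₁}⟨λ,g_t(x_t)⟩ − R^D₁/ρ̃; (iii) either T₁ = T or max_i Σ_{t=1}^{T₁} g_{t,i}(x_t) ≥ (T−T₁)ρ̃; (iv) for every i, Σ_{t=1}^{T₁} g_{t,i}(x_t) ≤ (T−T₁)ρ̃ + M; (v) Σ_{t=T₁+1}^{T}(−⟨λ_t,g_t(x_t)⟩) ≥ Σ_{t=T₁+1}^{T}(−⟨λ_t,g_t(ξ°)⟩) − 2R^P₂; (vi) for every λ ∈ Δ_m, Σ_{t=T₁+1}^{T}⟨λ_t,g_t(x_t)⟩ ≥ Σ_{t=T₁+1}^{T}⟨λ,g_t(x_t)⟩ − R^D₂. Then: Σ_{t=1}^{T} f_t(x_t) ≥ (ρ/(1+ρ))·Σ_{t=1}^{T} f_t(ξ*) − (1+2/ρ̃)R^P₁ − R^D₁/ρ̃, and for every i ∈ [m], Σ_{t=1}^{T} g_{t,i}(x_t) ≤ M + 2R^P₂ + R^D₂. -/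
open MeasureTheory Finset

/-!
With `β = ρ/(1+ρ)`, the mixture `β ξ* + (1-β) ξ°` satisfies every constraint in expectation and
earns at least `β` times the reward of `ξ*`. The primal regret bound (i) is affine in the
comparator, so combining its instances at `ξ*` and `ξ°` with weights `β, 1-β` compares the play
phase with this mixture. The dual bound (ii) against `0`, or against the vertex `eᵢ/ρ̃` of the
coordinate that stopped the play phase, shows that the accumulated Lagrangian penalty pays for
the reward, at most `T - T₁`, lost during recovery. In the recovery phase, (v) against the strictly
feasible `ξ°` pushes the Lagrangian violation below `-(T - T₁)ρ`, and (vi) against `eᵢ` transfers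
this to coordinate `i`, cancelling the slack `(T - T₁)ρ̃` allowed by the threshold (iv).
-/

theorem sum_Icc_one_eq_add_sum_Icc {M : Type*} [AddCommMonoid M] (u : ℕ → M) {a b : ℕ}
    (hab : a ≤ b) :
    ∑ t ∈ Icc 1 b, u t = ∑ t ∈ Icc 1 a, u t + ∑ t ∈ Icc (a + 1) b, u t := by
  have hIcc (n : ℕ) : Icc 1 n = Ioc 0 n := Icc_add_one_left_eq_Ioc 0 n
  rw [hIcc, hIcc, Icc_add_one_left_eq_Ioc, sum_Ioc_consecutive u (Nat.zero_le a) hab]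

theorem card_Icc_add_one_cast {a b : ℕ} (hab : a ≤ b) :
    ((Icc (a + 1) b).card : ℝ) = b - a := by
  rw [Nat.card_Icc, Nat.add_sub_add_right, Nat.cast_sub hab]

theorem integral_le_of_forall_le {X : Type*} [MeasurableSpace X] {μ : Measure X}
    [IsProbabilityMeasure μ] {h : X → ℝ} {c : ℝ} (hc : 0 ≤ c) (hle : ∀ y, h y ≤ c) :
    ∫ y, h y ∂μ ≤ c := by
  by_cases hint : Integrable h μ
  · calc ∫ y, h y ∂μ ≤ ∫ _, c ∂μ := integral_mono hint (integrable_const c) hle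
      _ = c := by simp
  · rw [integral_undef hint]
    exact hc

theorem sum_sum_mul_le_card_mul {α ι : Type*} [Fintype ι] (s : Finset α) (w v : α → ι → ℝ)
    {c : ℝ} (hw : ∀ t ∈ s, (∀ i, 0 ≤ w t i) ∧ ∑ i, w t i = 1) (hv : ∀ t ∈ s, ∀ i, v t i ≤ c) :
    ∑ t ∈ s, ∑ i, w t i * v t i ≤ s.card * c := by
  rw [← nsmul_eq_mul]
  refine sum_le_card_nsmul s _ c fun t ht => ?_
  calc ∑ i, w t i * v t i ≤ ∑ i, w t i * c :=
        sum_le_sum fun i _ => mul_le_mul_of_nonneg_left (hv t ht i) ((hw t ht).1 i)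
    _ = c := by rw [← sum_mul, (hw t ht).2, one_mul]

theorem mul_sum_le_card {α : Type*} (s : Finset α) (F : α → ℝ) {β : ℝ} (hβ : β ≤ 1)
    (hF0 : ∀ t ∈ s, 0 ≤ F t) (hF1 : ∀ t ∈ s, F t ≤ 1) :
    β * ∑ t ∈ s, F t ≤ s.card := by
  refine (mul_le_of_le_one_left (sum_nonneg hF0) hβ).trans ?_
  simpa using sum_le_card_nsmul s F 1 hF1

theorem mul_le_mixture_lagrangian {ι : Type*} [Fintype ι] {ρ Fs Fo : ℝ} {l Gs Go : ι → ℝ}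
    (hρ : 0 ≤ ρ) (hl : ∀ i, 0 ≤ l i) (hFo : 0 ≤ Fo) (hGs : ∀ i, Gs i ≤ 1)
    (hGo : ∀ i, Go i ≤ -ρ) :
    ρ / (1 + ρ) * Fs ≤
      ρ / (1 + ρ) * (Fs - ∑ i, l i * Gs i) + (1 - ρ / (1 + ρ)) * (Fo - ∑ i, l i * Go i) := by
  have hρ1 : 0 < 1 + ρ := by linarith
  have hcompl : 1 - ρ / (1 + ρ) = 1 / (1 + ρ) := by field_simp; ring
  rw [hcompl]
  have hmix : ∀ i, ρ / (1 + ρ) * Gs i + 1 / (1 + ρ) * Go i ≤ 0 := fun i => by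
    rw [show ρ / (1 + ρ) * Gs i + 1 / (1 + ρ) * Go i = (ρ * Gs i + Go i) / (1 + ρ) by ring]
    exact div_nonpos_of_nonpos_of_nonneg (by nlinarith [hGs i, hGo i]) hρ1.le
  have hmix_sum : ρ / (1 + ρ) * ∑ i, l i * Gs i + 1 / (1 + ρ) * ∑ i, l i * Go i ≤ 0 := by
    rw [mul_sum, mul_sum, ← sum_add_distrib]
    refine sum_nonpos fun i _ => ?_
    rw [show ρ / (1 + ρ) * (l i * Gs i) + 1 / (1 + ρ) * (l i * Go i) =
      l i * (ρ / (1 + ρ) * Gs i + 1 / (1 + ρ) * Go i) by ring]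
    exact mul_nonpos_of_nonneg_of_nonpos (hl i) (hmix i)
  have hFo' : 0 ≤ 1 / (1 + ρ) * Fo := by positivity
  linarith

theorem mul_sum_le_of_regret_against_feasible {α ι : Type*} [Fintype ι] (s : Finset α)
    (lam Gs Go : α → ι → ℝ) (Fs Fo : α → ℝ) {ρ A C : ℝ} (hρ : 0 ≤ ρ)
    (hlam : ∀ t ∈ s, ∀ i, 0 ≤ lam t i) (hFo : ∀ t ∈ s, 0 ≤ Fo t)
    (hGs : ∀ t ∈ s, ∀ i, Gs t i ≤ 1) (hGo : ∀ t ∈ s, ∀ i, Go t i ≤ -ρ)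
    (hs : A ≥ ∑ t ∈ s, (Fs t - ∑ i, lam t i * Gs t i) - C)
    (ho : A ≥ ∑ t ∈ s, (Fo t - ∑ i, lam t i * Go t i) - C) :
    ρ / (1 + ρ) * ∑ t ∈ s, Fs t - C ≤ A := by
  set β := ρ / (1 + ρ)
  have hβ0 : 0 ≤ β := by positivity
  have hβ1 : β ≤ 1 := div_le_one_of_le₀ (by linarith) (by linarith)
  have hrounds : β * ∑ t ∈ s, Fs t ≤
      β * ∑ t ∈ s, (Fs t - ∑ i, lam t i * Gs t i) +
        (1 - β) * ∑ t ∈ s, (Fo t - ∑ i, lam t i * Go t i) := by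
    rw [mul_sum, mul_sum, mul_sum, ← sum_add_distrib]
    exact sum_le_sum fun t ht =>
      mul_le_mixture_lagrangian hρ (hlam t ht) (hFo t ht) (hGs t ht) (hGo t ht)
  linarith [mul_le_mul_of_nonneg_left hs hβ0, mul_le_mul_of_nonneg_left ho (sub_nonneg.mpr hβ1)]

theorem le_sum_of_dual_regret {α ι : Type*} [Fintype ι] [DecidableEq ι] (s : Finset α)
    (lam G : α → ι → ℝ) {ρ R K : ℝ} (hρ : 0 < ρ)
    (hD : ∀ l : ι → ℝ, (∀ i, 0 ≤ l i) → ∑ i, l i ≤ 1 / ρ →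
      ∑ t ∈ s, ∑ i, lam t i * G t i ≥ ∑ t ∈ s, ∑ i, l i * G t i - R)
    (hK : K = 0 ∨ ∃ i, K * ρ ≤ ∑ t ∈ s, G t i) :
    K - R ≤ ∑ t ∈ s, ∑ i, lam t i * G t i := by
  rcases hK with rfl | ⟨i, hi⟩
  · simpa using hD 0 (fun _ => le_rfl) (by simp; positivity)
  · have hvertex := hD (Pi.single i (1 / ρ))
      (fun j => by simp [Pi.single_apply]; split <;> positivity) (by simp)
    simp only [Pi.single_apply, ite_mul, zero_mul, sum_ite_eq', mem_univ, if_true,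
      ← mul_sum] at hvertex
    have hKi : K ≤ 1 / ρ * ∑ t ∈ s, G t i := by
      rw [one_div, inv_mul_eq_div, le_div_iff₀ hρ]
      exact hi
    linarith

theorem sum_le_of_simplex_regret {α ι : Type*} [Fintype ι] [DecidableEq ι] (s : Finset α)
    (lam G Go : α → ι → ℝ) {ρ RP RD : ℝ}
    (hlam : ∀ t ∈ s, (∀ i, 0 ≤ lam t i) ∧ ∑ i, lam t i = 1)
    (hGo : ∀ t ∈ s, ∀ i, Go t i ≤ -ρ)
    (hP : ∑ t ∈ s, (-(∑ i, lam t i * G t i)) ≥ ∑ t ∈ s, (-(∑ i, lam t i * Go t i)) - RP)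
    (hD : ∀ l : ι → ℝ, (∀ i, 0 ≤ l i) → ∑ i, l i = 1 →
      ∑ t ∈ s, ∑ i, lam t i * G t i ≥ ∑ t ∈ s, ∑ i, l i * G t i - RD)
    (i : ι) :
    ∑ t ∈ s, G t i ≤ RP + RD - s.card * ρ := by
  have hvertex := hD (Pi.single i 1) (fun j => by simp [Pi.single_apply]; split <;> norm_num)
    (by simp)
  simp only [Pi.single_apply, ite_mul, one_mul, zero_mul, sum_ite_eq', mem_univ, if_true]
    at hvertex
  have hfeas := sum_sum_mul_le_card_mul s lam Go hlam hGo
  simp only [sum_neg_distrib] at hP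
  linarith

theorem statement13_general {X : Type} [MeasurableSpace X] {m : ℕ}
    (T T₁ : ℕ) (hTT : T₁ ≤ T)
    (ρt ρ : ℝ) (hρt : 0 < ρt) (hρtρ : ρt ≤ ρ)
    (x : ℕ → X) (lam : ℕ → Fin m → ℝ)
    -- play-phase duals lie in `D_{ρ̃}`, recovery-phase duals lie in `Δ_m`
    (hlam1 : ∀ t ∈ Finset.Icc 1 T₁, (∀ i, 0 ≤ lam t i) ∧ ∑ i, lam t i ≤ 1 / ρt)
    (hlam2 : ∀ t ∈ Finset.Icc (T₁ + 1) T, (∀ i, 0 ≤ lam t i) ∧ ∑ i, lam t i = 1)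
    (f : ℕ → X → ℝ) (g : ℕ → Fin m → X → ℝ)
    (hf01 : ∀ t y, f t y ∈ Set.Icc (0:ℝ) 1)
    (hg1 : ∀ t i y, g t i y ∈ Set.Icc (-1:ℝ) 1)
    (ξs ξo : ProbabilityMeasure X)
    -- ξ° is strictly feasible by margin ρ for every round's constraints
    (hfeaso : ∀ t ∈ Finset.Icc 1 T, ∀ i, ∫ y, g t i y ∂(ξo : Measure X) ≤ -ρ)
    (M RP1 RD1 RP2 RD2 : ℝ)
    -- (i) play-phase primal regret bound against every fixed mixture
    (h1 : ∀ ξ : ProbabilityMeasure X,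
          ∑ t ∈ Finset.Icc 1 T₁, (f t (x t) - ∑ i, lam t i * g t i (x t)) ≥
          ∑ t ∈ Finset.Icc 1 T₁, ((∫ y, f t y ∂(ξ : Measure X)) -
            ∑ i, lam t i * ∫ y, g t i y ∂(ξ : Measure X)) - (1 + 2 / ρt) * RP1)
    -- (ii) play-phase dual regret bound
    (h2 : ∀ l : Fin m → ℝ, (∀ i, 0 ≤ l i) → (∑ i, l i ≤ 1 / ρt) →
          ∑ t ∈ Finset.Icc 1 T₁, ∑ i, lam t i * g t i (x t) ≥
          ∑ t ∈ Finset.Icc 1 T₁, ∑ i, l i * g t i (x t) - RD1 / ρt)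
    -- (iii) stopping condition of the play phase
    (h3 : T₁ = T ∨ ∃ i, ((T : ℝ) - (T₁ : ℝ)) * ρt ≤ ∑ t ∈ Finset.Icc 1 T₁, g t i (x t))
    -- (iv) play-phase violation threshold
    (h4 : ∀ i, ∑ t ∈ Finset.Icc 1 T₁, g t i (x t) ≤ ((T : ℝ) - (T₁ : ℝ)) * ρt + M)
    -- (v) recovery-phase primal regret bound
    (h5 : ∑ t ∈ Finset.Icc (T₁ + 1) T, (-(∑ i, lam t i * g t i (x t))) ≥
          ∑ t ∈ Finset.Icc (T₁ + 1) T,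
            (-(∑ i, lam t i * ∫ y, g t i y ∂(ξo : Measure X))) - 2 * RP2)
    -- (vi) recovery-phase dual regret bound
    (h6 : ∀ l : Fin m → ℝ, (∀ i, 0 ≤ l i) → (∑ i, l i = 1) →
          ∑ t ∈ Finset.Icc (T₁ + 1) T, ∑ i, lam t i * g t i (x t) ≥
          ∑ t ∈ Finset.Icc (T₁ + 1) T, ∑ i, l i * g t i (x t) - RD2) :
    (∑ t ∈ Finset.Icc 1 T, f t (x t) ≥
      (ρ / (1 + ρ)) * ∑ t ∈ Finset.Icc 1 T, (∫ y, f t y ∂(ξs : Measure X))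
        - (1 + 2 / ρt) * RP1 - RD1 / ρt) ∧
    (∀ i, ∑ t ∈ Finset.Icc 1 T, g t i (x t) ≤ M + 2 * RP2 + RD2) := by
  have hρ : 0 < ρ := hρt.trans_le hρtρ
  have hgap : (0 : ℝ) ≤ T - T₁ := sub_nonneg.mpr (by exact_mod_cast hTT)
  have hfeas_play : ∀ t ∈ Icc 1 T₁, ∀ i, ∫ y, g t i y ∂(ξo : Measure X) ≤ -ρ :=
    fun t ht => hfeaso t (Icc_subset_Icc_right hTT ht)
  have hfeas_rec : ∀ t ∈ Icc (T₁ + 1) T, ∀ i, ∫ y, g t i y ∂(ξo : Measure X) ≤ -ρ :=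
    fun t ht => hfeaso t (Icc_subset_Icc_left (Nat.le_add_left 1 T₁) ht)
  refine ⟨?_, fun i => ?_⟩
  · have hprimal := mul_sum_le_of_regret_against_feasible (Icc 1 T₁) lam
      (fun t i => ∫ y, g t i y ∂(ξs : Measure X)) (fun t i => ∫ y, g t i y ∂(ξo : Measure X))
      (fun t => ∫ y, f t y ∂(ξs : Measure X)) (fun t => ∫ y, f t y ∂(ξo : Measure X)) hρ.le
      (fun t ht => (hlam1 t ht).1) (fun t _ => integral_nonneg fun y => (hf01 t y).1)
      (fun t _ i => integral_le_of_forall_le zero_le_one fun y => (hg1 t i y).2) hfeas_play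
      (h1 ξs) (h1 ξo)
    have hdual := le_sum_of_dual_regret (Icc 1 T₁) lam (fun t i => g t i (x t)) hρt h2
      (h3.imp_left fun h => by rw [h, sub_self])
    have hrec_reward : 0 ≤ ∑ t ∈ Icc (T₁ + 1) T, f t (x t) :=
      sum_nonneg fun t _ => (hf01 t (x t)).1
    have hrec_bench := mul_sum_le_card (Icc (T₁ + 1) T) (fun t => ∫ y, f t y ∂(ξs : Measure X))
      (div_le_one_of_le₀ (by linarith) (by linarith) : ρ / (1 + ρ) ≤ 1)
      (fun t _ => integral_nonneg fun y => (hf01 t y).1)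
      (fun t _ => integral_le_of_forall_le zero_le_one fun y => (hf01 t y).2)
    rw [card_Icc_add_one_cast hTT] at hrec_bench
    rw [sum_sub_distrib] at hprimal
    rw [sum_Icc_one_eq_add_sum_Icc _ hTT, sum_Icc_one_eq_add_sum_Icc _ hTT, mul_add]
    linarith
  · have hrec := sum_le_of_simplex_regret (Icc (T₁ + 1) T) lam (fun t i => g t i (x t))
      (fun t i => ∫ y, g t i y ∂(ξo : Measure X)) hlam2 hfeas_rec h5 h6 i
    rw [card_Icc_add_one_cast hTT] at hrec
    rw [sum_Icc_one_eq_add_sum_Icc _ hTT]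
    linarith [h4 i, mul_le_mul_of_nonneg_left hρtρ hgap]

/-- Deterministic core of the guarantee with adversarial rewards and adversarial
constraints: `ρ/(1+ρ)` fraction of the reward of any fixed mixture, sublinear violation. -/
theorem statement13 {X : Type} [MeasurableSpace X] {m : ℕ} (hm : 0 < m)
    (T T₁ : ℕ) (hT₁ : 1 ≤ T₁) (hTT : T₁ ≤ T)
    (ρt ρ : ℝ) (hρ : 0 ≤ ρ) (hρt : 0 < ρt) (hρtρ : ρt ≤ ρ)
    (x : ℕ → X) (lam : ℕ → Fin m → ℝ)
    -- play-phase duals lie in `D_{ρ̃}`, recovery-phase duals lie in `Δ_m`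
    (hlam1 : ∀ t ∈ Finset.Icc 1 T₁, (∀ i, 0 ≤ lam t i) ∧ ∑ i, lam t i ≤ 1 / ρt)
    (hlam2 : ∀ t ∈ Finset.Icc (T₁ + 1) T, (∀ i, 0 ≤ lam t i) ∧ ∑ i, lam t i = 1)
    (f : ℕ → X → ℝ) (g : ℕ → Fin m → X → ℝ)
    (hfm : ∀ t, Measurable (f t)) (hf01 : ∀ t y, f t y ∈ Set.Icc (0:ℝ) 1)
    (hgm : ∀ t i, Measurable (g t i)) (hg1 : ∀ t i y, g t i y ∈ Set.Icc (-1:ℝ) 1)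
    (ξs ξo : ProbabilityMeasure X)
    -- ξ° is strictly feasible by margin ρ for every round's constraints
    (hfeaso : ∀ t ∈ Finset.Icc 1 T, ∀ i, ∫ y, g t i y ∂(ξo : Measure X) ≤ -ρ)
    (M RP1 RD1 RP2 RD2 : ℝ)
    (hM : 0 ≤ M) (hRP1 : 0 ≤ RP1) (hRD1 : 0 ≤ RD1) (hRP2 : 0 ≤ RP2) (hRD2 : 0 ≤ RD2)
    -- (i) play-phase primal regret bound against every fixed mixture
    (h1 : ∀ ξ : ProbabilityMeasure X,
          ∑ t ∈ Finset.Icc 1 T₁, (f t (x t) - ∑ i, lam t i * g t i (x t)) ≥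
          ∑ t ∈ Finset.Icc 1 T₁, ((∫ y, f t y ∂(ξ : Measure X)) -
            ∑ i, lam t i * ∫ y, g t i y ∂(ξ : Measure X)) - (1 + 2 / ρt) * RP1)
    -- (ii) play-phase dual regret bound
    (h2 : ∀ l : Fin m → ℝ, (∀ i, 0 ≤ l i) → (∑ i, l i ≤ 1 / ρt) →
          ∑ t ∈ Finset.Icc 1 T₁, ∑ i, lam t i * g t i (x t) ≥
          ∑ t ∈ Finset.Icc 1 T₁, ∑ i, l i * g t i (x t) - RD1 / ρt)
    -- (iii) stopping condition of the play phase
    (h3 : T₁ = T ∨ ∃ i, ((T : ℝ) - (T₁ : ℝ)) * ρt ≤ ∑ t ∈ Finset.Icc 1 T₁, g t i (x t))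
    -- (iv) play-phase violation threshold
    (h4 : ∀ i, ∑ t ∈ Finset.Icc 1 T₁, g t i (x t) ≤ ((T : ℝ) - (T₁ : ℝ)) * ρt + M)
    -- (v) recovery-phase primal regret bound
    (h5 : ∑ t ∈ Finset.Icc (T₁ + 1) T, (-(∑ i, lam t i * g t i (x t))) ≥
          ∑ t ∈ Finset.Icc (T₁ + 1) T,
            (-(∑ i, lam t i * ∫ y, g t i y ∂(ξo : Measure X))) - 2 * RP2)
    -- (vi) recovery-phase dual regret bound
    (h6 : ∀ l : Fin m → ℝ, (∀ i, 0 ≤ l i) → (∑ i, l i = 1) →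
          ∑ t ∈ Finset.Icc (T₁ + 1) T, ∑ i, lam t i * g t i (x t) ≥
          ∑ t ∈ Finset.Icc (T₁ + 1) T, ∑ i, l i * g t i (x t) - RD2) :
    (∑ t ∈ Finset.Icc 1 T, f t (x t) ≥
      (ρ / (1 + ρ)) * ∑ t ∈ Finset.Icc 1 T, (∫ y, f t y ∂(ξs : Measure X))
        - (1 + 2 / ρt) * RP1 - RD1 / ρt) ∧
    (∀ i, ∑ t ∈ Finset.Icc 1 T, g t i (x t) ≤ M + 2 * RP2 + RD2) :=
  statement13_general T T₁ hTT ρt ρ hρt hρtρ x lam hlam1 hlam2 f g hf01 hg1 ξs ξo hfeaso M RP1 RD1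
    RP2 RD2 h1 h2 h3 h4 h5 h6
end
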